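/- Let R be a ring with Jacobson radical J(R). Then every cyclically presented right R-module has a projective cover if and only if R/J(R) is Von Neumann regular and idempotents can be lifted modulo J(R). -/

import Mathlib

open Submodule LinearMap Function

/-- `M` has a projective cover: an epimorphism `p : P → M` with `P` projective and
`ker p` superfluous (small) in `P`. -/
def HasProjectiveCover (S : Type u) [Ring S] (M : Type v) [AddCommGroup M]
    [Module S M] : Prop :=
  ∃ (P : Type u) (_ : AddCommGroup P) (_ : Module S P) (p : P →ₗ[S] M),
    Module.Projective S P ∧ Function.Surjective p ∧
    ∀ L : Submodule S P, LinearMap.ker p ⊔ L = ⊤ → L = ⊤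

/-- The Jacobson radical of `R`, as a set: `x ∈ J(R)` iff `1 - x y` is a unit for all `y`. -/
def jacobsonRadicalSet (R : Type u) [Ring R] : Set R :=
  {x : R | ∀ y : R, IsUnit (1 - x * y)}

/-!
Over `A = Rᵐᵒᵖ` right `R`-modules are left `A`-modules, and both ring-theoretic conditions are
left–right symmetric, so it suffices to treat left modules `A ⧸ A a`. The bridge is Nicholson's
condition: each `A a` contains an idempotent `f` with `a (1 - f) ∈ J`. Given it,
`A (1 - f) → A ⧸ A a` is a projective cover, its kernel lying in `J • A (1 - f)`. Conversely, for a
projective cover `p : P → A ⧸ A a`, the map `A → P` onto a lift of `1` is surjective because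
`ker p` is superfluous, so it splits; the splitting yields the idempotent, and `a (1 - f)` lies in
the (superfluous) image of `ker p` in `A`, hence in `J`. Nicholson's condition is equivalent to
`A/J` being regular with idempotents lifting: lift `b a` (idempotent mod `J` when `a ≡ a b a`) and
conjugate the lift into `A a` by a unit of `1 + J`.
-/

section JacobsonRadical

variable {A : Type u} [Ring A]

theorem isUnit_one_sub_mul_comm {a b : A} : IsUnit (1 - a * b) ↔ IsUnit (1 - b * a) := by
  -- Jacobson's lemma, as the spectral statement `1 ∈ σ (a * b) ↔ 1 ∈ σ (b * a)` over `ℤ`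
  simpa [spectrum.mem_iff] using
    (spectrum.unit_mem_mul_comm (R := ℤ) (r := 1) (a := a) (b := b)).not

theorem exists_mul_one_sub_eq_one_of_mem_jacobson {x : A} (hx : x ∈ Ring.jacobson A) :
    ∃ z, z * (1 - x) = 1 := by
  rw [← Ideal.jacobson_bot, Ideal.mem_jacobson_iff] at hx
  obtain ⟨z, hz⟩ := hx (-1)
  rw [Submodule.mem_bot, sub_eq_zero] at hz
  exact ⟨z, .trans (by noncomm_ring) hz⟩

theorem isUnit_one_sub_of_mem_jacobson {x : A} (hx : x ∈ Ring.jacobson A) : IsUnit (1 - x) := by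
  obtain ⟨z, hz⟩ := exists_mul_one_sub_eq_one_of_mem_jacobson hx
  -- `z = 1 - (-(z * x))` again has a left inverse, so `z` is a unit with inverse `1 - x`
  obtain ⟨w, hw⟩ := exists_mul_one_sub_eq_one_of_mem_jacobson
    (neg_mem (Ideal.mul_mem_left _ z hx))
  have hz' : 1 - -(z * x) = z := by rw [sub_neg_eq_add, ← hz, mul_one_sub, sub_add_cancel]
  rw [hz'] at hw
  have hzx : (1 - x) * z = 1 := by rwa [← left_inv_eq_right_inv hw hz]
  exact ⟨⟨1 - x, z, hzx, hz⟩, rfl⟩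

theorem mem_jacobsonRadicalSet_iff {x : A} : x ∈ jacobsonRadicalSet A ↔ x ∈ Ring.jacobson A := by
  refine ⟨fun hx => ?_, fun hx y => isUnit_one_sub_of_mem_jacobson (Ideal.mul_mem_right y _ hx)⟩
  rw [← Ideal.jacobson_bot, Ideal.mem_jacobson_iff]
  intro y
  obtain ⟨u, hu⟩ := isUnit_one_sub_mul_comm.1 (hx (-y))
  refine ⟨↑u⁻¹, ?_⟩
  have h : (↑u⁻¹ : A) * (1 - -y * x) = 1 := by rw [← hu]; exact u.inv_mul
  rw [Submodule.mem_bot, sub_eq_zero, ← h]; noncomm_ring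

theorem MulOpposite.op_mem_jacobson_iff {x : A} :
    MulOpposite.op x ∈ Ring.jacobson Aᵐᵒᵖ ↔ x ∈ Ring.jacobson A := by
  simp only [← mem_jacobsonRadicalSet_iff, jacobsonRadicalSet, Set.mem_ofPred_eq,
    MulOpposite.op_surjective.forall, ← MulOpposite.op_mul, ← MulOpposite.op_one,
    ← MulOpposite.op_sub, isUnit_op]
  exact forall_congr' fun _ => isUnit_one_sub_mul_comm.symm

end JacobsonRadical

namespace Submodule

variable {R : Type*} [Ring R] {M M' : Type*} [AddCommGroup M] [Module R M]
  [AddCommGroup M'] [Module R M']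

def IsSuperfluous (N : Submodule R M) : Prop :=
  ∀ L : Submodule R M, N ⊔ L = ⊤ → L = ⊤

theorem IsSuperfluous.le_jacobson {N : Submodule R M} (hN : N.IsSuperfluous) :
    N ≤ Module.jacobson R M :=
  le_sInf fun m hm => by_contra fun hNm => hm.1 (hN m (hm.2 _ (right_lt_sup.2 hNm)))

theorem isSuperfluous_of_le_jacobson [Module.Finite R M] {N : Submodule R M}
    (hN : N ≤ Module.jacobson R M) : N.IsSuperfluous := by
  intro L hL
  by_contra hLtop
  obtain ⟨m, hm, hLm⟩ := (eq_top_or_exists_le_coatom L).resolve_left hLtop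
  exact hm.1 (top_unique (hL ▸ sup_le (hN.trans (sInf_le hm)) hLm))

theorem IsSuperfluous.map {N : Submodule R M} (hN : N.IsSuperfluous) (f : M →ₗ[R] M') :
    (N.map f).IsSuperfluous := by
  intro L hL
  have hcomap : L.comap f = ⊤ := hN _ <| eq_top_iff.2 fun x _ => by
    obtain ⟨_, ⟨n, hn, rfl⟩, l, hl, hnl⟩ := mem_sup.1 (hL ▸ mem_top : f x ∈ N.map f ⊔ L)
    exact mem_sup.2 ⟨n, hn, x - n, by simpa [← hnl] using hl, add_sub_cancel _ _⟩
  exact top_unique (hL ▸ sup_le (map_le_iff_le_comap.2 (hcomap ▸ le_top)) le_rfl)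

theorem IsSuperfluous.surjective_of_surjective_comp {p : M →ₗ[R] M'}
    (hp : (LinearMap.ker p).IsSuperfluous) {M₀ : Type*} [AddCommGroup M₀] [Module R M₀]
    {g : M₀ →ₗ[R] M} (hpg : Surjective (p ∘ₗ g)) : Surjective g := by
  refine LinearMap.range_eq_top.1 (hp _ (eq_top_iff.2 fun x _ => ?_))
  obtain ⟨y, hy⟩ := hpg (p x)
  exact mem_sup.2 ⟨x - g y, by simp [← hy], g y, ⟨y, rfl⟩, sub_add_cancel _ _⟩

end Submodule

theorem hasProjectiveCover_of_ker_le_jacobson {S : Type u} [Ring S] {M : Type v} [AddCommGroup M]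
    [Module S M] {P : Type u} [AddCommGroup P] [Module S P] [Module.Projective S P]
    [Module.Finite S P] (p : P →ₗ[S] M) (hp : Surjective p)
    (hker : ker p ≤ Module.jacobson S P) : HasProjectiveCover S M :=
  ⟨P, _, _, p, ‹_›, hp, isSuperfluous_of_le_jacobson hker⟩

theorem HasProjectiveCover.of_linearEquiv {S : Type u} [Ring S] {M M' : Type v} [AddCommGroup M]
    [Module S M] [AddCommGroup M'] [Module S M'] (e : M ≃ₗ[S] M') :
    HasProjectiveCover S M → HasProjectiveCover S M' := by
  rintro ⟨P, _, _, p, hP, hp, hker⟩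
  refine ⟨P, _, _, e.toLinearMap ∘ₗ p, hP, e.surjective.comp hp, ?_⟩
  rwa [LinearMap.ker_comp, LinearEquiv.ker, Submodule.comap_bot]

section Idempotent

variable {A : Type u} [Ring A] {e : A}

theorem IsIdempotentElem.mul_eq_self_of_mem_span_singleton (he : IsIdempotentElem e) {x : A}
    (hx : x ∈ span A {e}) : x * e = x := by
  obtain ⟨c, rfl⟩ := mem_span_singleton.1 hx
  rw [smul_eq_mul, mul_assoc, he.eq]

theorem IsIdempotentElem.projective_span_singleton (he : IsIdempotentElem e) :
    Module.Projective A (span A {e}) :=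
  .of_split (span A {e}).subtype
    ((toSpanSingleton A A e).codRestrict _ fun x => mem_span_singleton.2 ⟨x, rfl⟩)
    (LinearMap.ext fun x => Subtype.ext (he.mul_eq_self_of_mem_span_singleton x.2))

end Idempotent

/-- Nicholson's elementwise characterisation of semiregular rings. -/
def IsSemiregular (A : Type u) [Ring A] : Prop :=
  ∀ a : A, ∃ f : A, IsIdempotentElem f ∧ f ∈ span A {a} ∧ a - a * f ∈ Ring.jacobson A

def IsRegularModJacobson (A : Type u) [Ring A] : Prop :=
  ∀ a : A, ∃ b : A, a - a * b * a ∈ Ring.jacobson A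

def IdempotentsLiftModJacobson (A : Type u) [Ring A] : Prop :=
  ∀ e : A, e * e - e ∈ Ring.jacobson A → ∃ f : A, f * f = f ∧ f - e ∈ Ring.jacobson A

section Semiregular

variable {A : Type u} [Ring A]

theorem IsSemiregular.hasProjectiveCover (h : IsSemiregular A) (a : A) :
    HasProjectiveCover A (A ⧸ span A {a}) := by
  obtain ⟨f, hf, hfa, haf⟩ := h a
  have he := hf.one_sub
  have := he.projective_span_singleton
  refine hasProjectiveCover_of_ker_le_jacobson
    ((span A {a}).mkQ ∘ₗ (span A {1 - f}).subtype) (fun m => ?_) (fun k hk => ?_)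
  · obtain ⟨x, rfl⟩ := mkQ_surjective _ m
    refine ⟨⟨x * (1 - f), mem_span_singleton.2 ⟨x, rfl⟩⟩, (Submodule.Quotient.eq _).2 ?_⟩
    simpa [mul_sub] using neg_mem (smul_mem _ x hfa)
  · have hke : (k : A) * (1 - f) = k := he.mul_eq_self_of_mem_span_singleton k.2
    obtain ⟨c, hc⟩ := mem_span_singleton.1 (by simpa using hk : (k : A) ∈ span A {a})
    have hkJ : (k : A) ∈ Ring.jacobson A := by
      rw [← hke, ← hc, smul_eq_mul, mul_assoc, mul_one_sub]
      exact Ideal.mul_mem_left _ c haf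
    have hk_smul : k = (k : A) • ⟨1 - f, mem_span_singleton_self _⟩ := Subtype.ext hke.symm
    rw [hk_smul]
    exact Ring.jacobson_smul_top_le A _ (smul_mem_smul hkJ mem_top)

theorem IsSemiregular.of_hasProjectiveCover
    (h : ∀ a : A, HasProjectiveCover A (A ⧸ span A {a})) : IsSemiregular A := by
  intro a
  obtain ⟨P, _, _, p, hP, hp, hker⟩ := h a
  obtain ⟨q, hq⟩ := hp (Submodule.Quotient.mk 1)
  set g := toSpanSingleton A P q
  have hpg (s : A) : p (g s) = Submodule.Quotient.mk s := by
    simp [g, hq, ← Submodule.Quotient.mk_smul]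
  have hg : Surjective g :=
    IsSuperfluous.surjective_of_surjective_comp hker fun m => by
      obtain ⟨s, rfl⟩ := mkQ_surjective _ m
      exact ⟨s, hpg s⟩
  obtain ⟨σ, hσ⟩ := Module.projective_lifting_property g LinearMap.id hg
  have hgσ : g (σ q) = q := LinearMap.congr_fun hσ q
  have hσg (s : A) : σ (g s) = s * σ q := by simp [g]
  refine ⟨1 - σ q, IsIdempotentElem.one_sub ?_, ?_, ?_⟩
  · rw [IsIdempotentElem, ← hσg, hgσ]
  · rw [← Submodule.Quotient.mk_eq_zero, ← hpg, map_sub, hgσ]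
    simp [g]
  · have hga : g a ∈ ker p := by simp [hpg]
    rw [mul_one_sub, sub_sub_cancel, ← hσg]
    exact (IsSuperfluous.map hker σ).le_jacobson (mem_map_of_mem hga)

theorem exists_isIdempotentElem_mem_span_of_sub_mem_jacobson {f x : A} (hf : IsIdempotentElem f)
    (hfx : f - x ∈ Ring.jacobson A) :
    ∃ e : A, IsIdempotentElem e ∧ e ∈ span A {x} ∧ e - f ∈ Ring.jacobson A := by
  have hJ : f * (f - x) ∈ Ring.jacobson A := Ideal.mul_mem_left _ f hfx
  obtain ⟨u, hu⟩ := isUnit_one_sub_of_mem_jacobson hJ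
  -- conjugating `f` by the unit `u ≡ 1` with `f * u = f * x` moves it into `A x`
  have hfu : f * u = f * x := by
    rw [hu, mul_one_sub, ← mul_assoc, hf.eq, mul_sub, hf.eq, sub_sub_cancel]
  refine ⟨↑u⁻¹ * f * u, ?_,
    mem_span_singleton.2 ⟨↑u⁻¹ * f, by rw [smul_eq_mul, mul_assoc, mul_assoc, hfu]⟩, ?_⟩
  · have hff (y : A) : f * (f * y) = f * y := by rw [← mul_assoc, hf.eq]
    simp [IsIdempotentElem, mul_assoc, hff]
  · have hu1 : (u : A) - 1 ∈ Ring.jacobson A := by rw [hu, sub_sub_cancel_left]; exact neg_mem hJ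
    have e : ↑u⁻¹ * f * u - f = ↑u⁻¹ * (f * (u - 1) - (u - 1) * f) := by
      rw [mul_sub_one, sub_one_mul, sub_sub_sub_cancel_right, mul_sub, ← mul_assoc,
        ← mul_assoc, u.inv_mul, one_mul]
    rw [e]
    exact Ideal.mul_mem_left _ _
      (sub_mem (Ideal.mul_mem_left _ f hu1) (Ideal.mul_mem_right f _ hu1))

theorem IsSemiregular.isRegularModJacobson (h : IsSemiregular A) : IsRegularModJacobson A := by
  intro a
  obtain ⟨f, -, hfa, haf⟩ := h a
  obtain ⟨c, rfl⟩ := mem_span_singleton.1 hfa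
  exact ⟨c, by rwa [mul_assoc]⟩

theorem IsSemiregular.idempotentsLiftModJacobson (h : IsSemiregular A) :
    IdempotentsLiftModJacobson A := by
  intro g hg
  obtain ⟨f, hf, hfg, hgf⟩ := h g
  obtain ⟨c, hc⟩ := mem_span_singleton.1 hfg
  -- modulo `J`, `f * g = f` and `g * f = g`, so `f + (1 - f) * g * f ≡ g`
  refine ⟨f + (1 - f) * g * f, ?_, ?_⟩
  · have e : (f + (1 - f) * g * f) * (f + (1 - f) * g * f) = f * f + f * (1 - f) * (g * f)
        + (1 - f) * g * (f * f) + (1 - f) * g * (f * (1 - f) * (g * f)) := by noncomm_ring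
    rw [e, hf.eq, hf.mul_one_sub_self]
    simp
  · have e : f + (1 - f) * g * f - g = (g * f - g) + c * (g - g * g) + f * (g - g * f) := by
      rw [← hc, smul_eq_mul]; noncomm_ring
    rw [e, ← neg_sub g, ← neg_sub (g * g)]
    exact add_mem (add_mem (neg_mem hgf) (Ideal.mul_mem_left _ c (neg_mem hg)))
      (Ideal.mul_mem_left _ f hgf)

theorem IsSemiregular.of_isRegularModJacobson (hreg : IsRegularModJacobson A)
    (hlift : IdempotentsLiftModJacobson A) : IsSemiregular A := by
  intro a
  obtain ⟨b, hb⟩ := hreg a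
  have hba : b * a * (b * a) - b * a ∈ Ring.jacobson A := by
    have e : b * a * (b * a) - b * a = -(b * (a - a * b * a)) := by noncomm_ring
    rw [e]
    exact neg_mem (Ideal.mul_mem_left _ b hb)
  obtain ⟨f, hf, hfba⟩ := hlift _ hba
  obtain ⟨e, he, heba, hef⟩ := exists_isIdempotentElem_mem_span_of_sub_mem_jacobson hf hfba
  have hea : e ∈ span A {a} :=
    (span_singleton_le_iff_mem _ _).2 (smul_mem _ b (mem_span_singleton_self a)) heba
  refine ⟨e, he, hea, ?_⟩
  have e : a - a * e = (a - a * b * a) - a * (f - b * a) - a * (e - f) := by noncomm_ring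
  rw [e]
  exact sub_mem (sub_mem hb (Ideal.mul_mem_left _ a hfba)) (Ideal.mul_mem_left _ a hef)

theorem isSemiregular_iff :
    IsSemiregular A ↔ IsRegularModJacobson A ∧ IdempotentsLiftModJacobson A :=
  ⟨fun h => ⟨h.isRegularModJacobson, h.idempotentsLiftModJacobson⟩,
    fun h => .of_isRegularModJacobson h.1 h.2⟩

theorem forall_hasProjectiveCover_iff_isSemiregular :
    (∀ a : A, HasProjectiveCover A (A ⧸ span A {a})) ↔ IsSemiregular A :=
  ⟨.of_hasProjectiveCover, IsSemiregular.hasProjectiveCover⟩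

open MulOpposite

theorem isRegularModJacobson_op_iff : IsRegularModJacobson Aᵐᵒᵖ ↔ IsRegularModJacobson A := by
  simp only [IsRegularModJacobson, op_surjective.forall, op_surjective.exists, ← op_mul,
    ← op_sub, op_mem_jacobson_iff, mul_assoc]

theorem idempotentsLiftModJacobson_op_iff :
    IdempotentsLiftModJacobson Aᵐᵒᵖ ↔ IdempotentsLiftModJacobson A := by
  simp only [IdempotentsLiftModJacobson, op_surjective.forall, op_surjective.exists, ← op_mul,
    ← op_sub, op_mem_jacobson_iff, op_inj]

end Semiregular

open MulOpposite in
theorem hasProjectiveCover_quotient_span_iff_op {R : Type u} [Ring R] (x : R) :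
    HasProjectiveCover Rᵐᵒᵖ (R ⧸ span Rᵐᵒᵖ {x}) ↔
      HasProjectiveCover Rᵐᵒᵖ (Rᵐᵒᵖ ⧸ span Rᵐᵒᵖ {op x}) := by
  -- not `MulOpposite.opLinearEquiv`: its target carries the transported module structure,
  -- not `Semiring.toModule`, so the quotients would not match syntactically
  let opEquiv : R ≃ₗ[Rᵐᵒᵖ] Rᵐᵒᵖ :=
    { toFun := op, invFun := unop, left_inv := fun _ => rfl, right_inv := fun _ => rfl,
      map_add' := fun _ _ => rfl, map_smul' := fun _ _ => rfl }
  let e := Quotient.equiv (span Rᵐᵒᵖ {x}) _ opEquiv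
    (by rw [Submodule.map_span, Set.image_singleton])
  exact ⟨.of_linearEquiv e, .of_linearEquiv e.symm⟩

theorem stmt_13 {R : Type u} [Ring R] :
    (∀ x : R,
      HasProjectiveCover Rᵐᵒᵖ (R ⧸ Submodule.span Rᵐᵒᵖ {x})) ↔
    ((∀ a : R, ∃ b : R, a - a * b * a ∈ jacobsonRadicalSet R) ∧
      (∀ e : R, e * e - e ∈ jacobsonRadicalSet R →
        ∃ f : R, f * f = f ∧ f - e ∈ jacobsonRadicalSet R)) := by
  simp only [mem_jacobsonRadicalSet_iff, hasProjectiveCover_quotient_span_iff_op]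
  change _ ↔ IsRegularModJacobson R ∧ IdempotentsLiftModJacobson R
  rw [← isRegularModJacobson_op_iff, ← idempotentsLiftModJacobson_op_iff, ← isSemiregular_iff,
    ← forall_hasProjectiveCover_iff_isSemiregular, MulOpposite.op_surjective.forall]
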